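/- arXiv:2409.18269 — 3 statements merged into one kernel-verified Lean document; each statement's English description precedes it below -/
import Mathlib

section
/- For any integer N ≥ 2, the function f(x) = (1 - x^N) / (2 - x) satisfies f(x) ≥ 1/2 for all x in the interval [0, 1 - 1/N]. -/
/-! By Bernoulli, `(1 + 1/m)^m ≥ 2`, so `x^(N-1) ≤ (1 - 1/N)^(N-1) ≤ 1/2` on the interval.
Hence `2 x^N ≤ x`, i.e. `1 - x^N ≥ 1 - x/2 = (2 - x)/2`. -/

lemma two_le_one_add_inv_pow {m : ℕ} (hm : m ≠ 0) : (2 : ℝ) ≤ (1 + (m : ℝ)⁻¹) ^ m := by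
  have hmul : (m : ℝ) * (m : ℝ)⁻¹ = 1 := mul_inv_cancel₀ (by exact_mod_cast hm)
  have hinv : (0 : ℝ) ≤ (m : ℝ)⁻¹ := by positivity
  have hbern := one_add_mul_le_pow (a := (m : ℝ)⁻¹) (by linarith) m
  linarith

lemma one_sub_inv_pow_pred_le_half {n : ℕ} (hn : 2 ≤ n) :
    (1 - (n : ℝ)⁻¹) ^ (n - 1) ≤ 1 / 2 := by
  obtain ⟨m, rfl⟩ : ∃ m, n = m + 1 := ⟨n - 1, by omega⟩
  have hm : m ≠ 0 := by omega
  have hm' : (m : ℝ) ≠ 0 := by exact_mod_cast hm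
  have hbase : 1 - ((m + 1 : ℕ) : ℝ)⁻¹ = (1 + (m : ℝ)⁻¹)⁻¹ := by
    push_cast
    field_simp
    ring
  rw [hbase, Nat.add_sub_cancel, inv_pow, one_div]
  exact inv_anti₀ two_pos (two_le_one_add_inv_pow hm)

lemma two_mul_pow_le_self {n : ℕ} (hn : 2 ≤ n) {x : ℝ} (hx0 : 0 ≤ x)
    (hx1 : x ≤ 1 - (n : ℝ)⁻¹) :
    2 * x ^ n ≤ x := by
  have hpow : x ^ (n - 1) ≤ 1 / 2 :=
    (pow_le_pow_left₀ hx0 hx1 _).trans (one_sub_inv_pow_pred_le_half hn)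
  calc 2 * x ^ n = 2 * x ^ (n - 1) * x := by
        rw [mul_assoc, ← pow_succ, Nat.sub_add_cancel (by omega)]
    _ ≤ 2 * (1 / 2) * x := by gcongr
    _ = x := by ring

theorem stmt_0 (N : ℕ) (hN : 2 ≤ N) (x : ℝ) (hx0 : 0 ≤ x) (hx1 : x ≤ 1 - 1 / N) :
    (1 - x ^ N) / (2 - x) ≥ 1 / 2 := by
  rw [one_div (N : ℝ)] at hx1
  have hinv : (0 : ℝ) ≤ (N : ℝ)⁻¹ := by positivity
  have hkey := two_mul_pow_le_self hN hx0 hx1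
  rw [ge_iff_le, le_div_iff₀ (by linarith)]
  linarith
end

section
/- Let X_1, ..., X_N be independent real-valued random variables, T ∈ ℝ, and for each i let t_i ≤ T with 0 ≤ t_i. Suppose for each i: E[(X_i - t_i)^+] ≤ (T - t_i)(1 - H_i(t_i)) where H_i(t_i) = P(X_i ≤ t_i). Let I be an index maximizing t_i. Then E[max_i X_i] ≤ t_I · H_I(t_I) + ∑_i T · (1 - H_i(t_i)). -/
/-! Pointwise, `max_i X_i ≤ t_I + ∑_i (X_i - t_i)⁺` because every `t_i ≤ t_I`. Taking
expectations and using the hypothesis on `E[(X_i - t_i)⁺]` gives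
`E[max_i X_i] ≤ t_I + ∑_i (T - t_i)(1 - H_i(t_i))`. Since all `t_i (1 - H_i(t_i)) ≥ 0`, the term
of index `I` alone already turns `t_I` into `t_I H_I(t_I)`. -/

open MeasureTheory

theorem MeasureTheory.Integrable.finset_sup' {Ω ι : Type*} [MeasurableSpace Ω] {μ : Measure Ω}
    {s : Finset ι} (hs : s.Nonempty) {X : ι → Ω → ℝ}
    (hX : ∀ i ∈ s, Integrable (X i) μ) :
    Integrable (fun ω => s.sup' hs fun i => X i ω) μ := by
  rw [show (fun ω => s.sup' hs fun i => X i ω) = s.sup' hs X from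
    funext fun ω => (Finset.sup'_apply hs X ω).symm]
  exact Finset.sup'_induction (p := fun f => Integrable f μ) hs X (fun _ hf _ hg => hf.sup hg) hX

theorem Finset.sup'_le_add_sum_max_sub_zero {ι : Type*} {s : Finset ι} (hs : s.Nonempty)
    (x t : ι → ℝ) {c : ℝ} (htc : ∀ i ∈ s, t i ≤ c) :
    s.sup' hs x ≤ c + ∑ i ∈ s, max (x i - t i) 0 := by
  refine Finset.sup'_le hs x fun j hj => ?_
  have hj_le : max (x j - t j) 0 ≤ ∑ i ∈ s, max (x i - t i) 0 :=
    Finset.single_le_sum (f := fun i => max (x i - t i) 0) (fun i _ => le_max_right _ _) hj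
  linarith [le_max_left (x j - t j) 0, htc j hj]

theorem MeasureTheory.integral_finset_sup'_le {Ω ι : Type*} [MeasurableSpace Ω] {μ : Measure Ω}
    [IsProbabilityMeasure μ] {s : Finset ι} (hs : s.Nonempty) {X : ι → Ω → ℝ}
    (hX : ∀ i ∈ s, Integrable (X i) μ) (t : ι → ℝ) {c : ℝ}
    (htc : ∀ i ∈ s, t i ≤ c) :
    ∫ ω, s.sup' hs (fun i => X i ω) ∂μ ≤
      c + ∑ i ∈ s, ∫ ω, max (X i ω - t i) 0 ∂μ := by
  have hpos : ∀ i ∈ s, Integrable (fun ω => max (X i ω - t i) 0) μ :=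
    fun i hi => ((hX i hi).sub (integrable_const (t i))).pos_part
  calc ∫ ω, s.sup' hs (fun i => X i ω) ∂μ
      ≤ ∫ ω, (c + ∑ i ∈ s, max (X i ω - t i) 0) ∂μ :=
        integral_mono (Integrable.finset_sup' hs hX)
          ((integrable_const c).add (integrable_finsetSum s hpos))
          fun ω => Finset.sup'_le_add_sum_max_sub_zero hs (fun i => X i ω) t htc
    _ = c + ∑ i ∈ s, ∫ ω, max (X i ω - t i) 0 ∂μ := by
        rw [integral_add (integrable_const c) (integrable_finsetSum s hpos),
          integral_finsetSum s hpos, integral_const, probReal_univ, one_smul]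

theorem Finset.add_sum_sub_mul_le {ι : Type*} {s : Finset ι} {I : ι} (hI : I ∈ s)
    (T : ℝ) {t q : ι → ℝ} (ht : ∀ i ∈ s, 0 ≤ t i) (hq : ∀ i ∈ s, 0 ≤ q i) :
    t I + ∑ i ∈ s, (T - t i) * q i ≤ t I * (1 - q I) + ∑ i ∈ s, T * q i := by
  have hI_le : t I * q I ≤ ∑ i ∈ s, t i * q i :=
    Finset.single_le_sum (f := fun i => t i * q i)
      (fun i hi => mul_nonneg (ht i hi) (hq i hi)) hI
  have hsplit : ∑ i ∈ s, (T - t i) * q i = ∑ i ∈ s, T * q i - ∑ i ∈ s, t i * q i := by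
    simp only [sub_mul, Finset.sum_sub_distrib]
  linarith

theorem stmt_6_general {Ω : Type*} [MeasurableSpace Ω] {μ : Measure Ω} [IsProbabilityMeasure μ]
    (N : ℕ) (hN : 0 < N) (X : Fin N → Ω → ℝ)
    (hint : ∀ i, Integrable (X i) μ)
    (T : ℝ) (t : Fin N → ℝ) (ht0 : ∀ i, 0 ≤ t i)
    (hcond : ∀ i, ∫ ω, max (X i ω - t i) 0 ∂μ ≤
      (T - t i) * (1 - (μ {ω | X i ω ≤ t i}).toReal))
    (I : Fin N) (hI : ∀ i, t i ≤ t I) :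
    ∫ ω, Finset.univ.sup' (Finset.univ_nonempty_iff.mpr (Fin.pos_iff_nonempty.mp hN))
        (fun i => X i ω) ∂μ ≤
      t I * (μ {ω | X I ω ≤ t I}).toReal +
        ∑ i, T * (1 - (μ {ω | X i ω ≤ t i}).toReal) := by
  set H : Fin N → ℝ := fun i => (μ {ω | X i ω ≤ t i}).toReal
  have hH_le_one : ∀ i, H i ≤ 1 := fun i => measureReal_le_one
  calc _ ≤ t I + ∑ i, ∫ ω, max (X i ω - t i) 0 ∂μ :=
        integral_finset_sup'_le _ (fun i _ => hint i) t fun i _ => hI i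
    _ ≤ t I + ∑ i, (T - t i) * (1 - H i) := by gcongr with i; exact hcond i
    _ ≤ t I * (1 - (1 - H I)) + ∑ i, T * (1 - H i) :=
        Finset.add_sum_sub_mul_le (Finset.mem_univ I) T (fun i _ => ht0 i)
          fun i _ => sub_nonneg.mpr (hH_le_one i)
    _ = t I * H I + ∑ i, T * (1 - H i) := by ring

theorem stmt_6 {Ω : Type*} [MeasurableSpace Ω] {μ : Measure Ω} [IsProbabilityMeasure μ]
    (N : ℕ) (hN : 0 < N) (X : Fin N → Ω → ℝ)
    (hmeas : ∀ i, Measurable (X i))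
    (hint : ∀ i, Integrable (X i) μ)
    (hindep : ProbabilityTheory.iIndepFun X μ)
    (T : ℝ) (t : Fin N → ℝ) (ht0 : ∀ i, 0 ≤ t i) (htT : ∀ i, t i ≤ T)
    (hcond : ∀ i, ∫ ω, max (X i ω - t i) 0 ∂μ ≤
      (T - t i) * (1 - (μ {ω | X i ω ≤ t i}).toReal))
    (I : Fin N) (hI : ∀ i, t i ≤ t I) :
    ∫ ω, Finset.univ.sup' (Finset.univ_nonempty_iff.mpr (Fin.pos_iff_nonempty.mp hN))
        (fun i => X i ω) ∂μ ≤
      t I * (μ {ω | X I ω ≤ t I}).toReal +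
        ∑ i, T * (1 - (μ {ω | X i ω ≤ t i}).toReal) :=
  stmt_6_general N hN X hint T t ht0 hcond I hI
end

section
/- Let f_1, ..., f_N: [0,1] → ℝ be twice differentiable positive log-concave probability density functions with CDFs H_1, ..., H_N (each positive on (0,1]), satisfying f_i(1) ≥ α > 0 and f_i'(1) ≥ -β for all i, and N ≥ 1 + β/α². Then for each i and every x ∈ (0,1]: f_i'(x)/f_i(x) + ∑_{j ≠ i} f_j(x)/H_j(x) ≥ 0. -/
/-!
Since `log f` is concave, `f' / f` is nonincreasing, so `f_i'(x)/f_i(x) ≥ f_i'(1)/f_i(1) ≥ -β/α`.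
Concavity of `log f` also gives `f(s) f(1) ≤ f(x) f(s + 1 - x)` for `s ≤ x`; integrating over
`s ∈ [0, x]` yields `f(1) H(x) ≤ f(x) ∫_{1-x}^1 f ≤ f(x)`, so each hazard ratio `f_j(x)/H_j(x)` is
at least `α`. The `N - 1` ratios then contribute `(N - 1) α ≥ β / α`.
-/

open Set intervalIntegral Real

lemma ConcaveOn.map_add_map_le_map_add_map_sub {S : Set ℝ} {φ : ℝ → ℝ} (hφ : ConcaveOn ℝ S φ)
    {a b c : ℝ} (ha : a ∈ S) (hb : b ∈ S) (hac : a ≤ c) (hcb : c ≤ b) :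
    φ a + φ b ≤ φ c + φ (a + b - c) := by
  rcases (hac.trans hcb).eq_or_lt with rfl | hab
  · obtain rfl : c = a := le_antisymm hcb hac
    simp
  -- `c` and `a + b - c` are the convex combinations of `a, b` with swapped weights `t, 1 - t`
  set t := (b - c) / (b - a)
  have hba : 0 < b - a := sub_pos.2 hab
  have ht0 : 0 ≤ t := div_nonneg (sub_nonneg.2 hcb) hba.le
  have ht1 : 0 ≤ 1 - t := by
    rw [sub_nonneg, div_le_one hba]; linarith
  have h₁ := hφ.2 ha hb ht0 ht1 (by ring)
  have h₂ := hφ.2 ha hb ht1 ht0 (by ring)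
  have e₁ : t • a + (1 - t) • b = c := by
    simp only [smul_eq_mul, t]; field_simp; ring
  have e₂ : (1 - t) • a + t • b = a + b - c := by
    simp only [smul_eq_mul, t]; field_simp; ring
  rw [e₁] at h₁
  rw [e₂] at h₂
  simp only [smul_eq_mul] at h₁ h₂
  linarith

lemma antitoneOn_logDeriv_of_concaveOn_log {S : Set ℝ} {f f' : ℝ → ℝ}
    (hlog : ConcaveOn ℝ S fun x => log (f x)) (hne : ∀ x ∈ S, f x ≠ 0)
    (hf : ∀ x ∈ S, HasDerivAt f (f' x) x) :
    AntitoneOn (fun x => f' x / f x) S := by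
  have hlog' : ∀ x ∈ S, HasDerivAt (fun y => log (f y)) (f' x / f x) x :=
    fun x hx => (hf x hx).log (hne x hx)
  intro x hx y hy hxy
  have := hlog.antitoneOn_deriv (fun z hz => (hlog' z hz).differentiableAt) hx hy hxy
  rwa [(hlog' x hx).deriv, (hlog' y hy).deriv] at this

section LogConcaveIntegral

variable {f : ℝ → ℝ} {a b x : ℝ}

lemma mul_integral_le_mul_integral_shift_of_concaveOn_log
    (hlog : ConcaveOn ℝ (Icc a b) fun x => log (f x)) (hpos : ∀ y ∈ Icc a b, 0 < f y)
    (hcont : ContinuousOn f (Icc a b)) (hx : x ∈ Icc a b) :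
    f b * ∫ s in a..x, f s ≤ f x * ∫ s in (a + b - x)..b, f s := by
  have hb : b ∈ Icc a b := right_mem_Icc.2 (hx.1.trans hx.2)
  have hIcc : Icc a x ⊆ Icc a b := Icc_subset_Icc_right hx.2
  have hshift : MapsTo (· + (b - x)) (Icc a x) (Icc a b) :=
    fun s hs => ⟨by linarith [hs.1, hx.2], by linarith [hs.2]⟩
  have hpt : ∀ s ∈ Icc a x, f b * f s ≤ f x * f (s + (b - x)) := by
    intro s hs
    have h := hlog.map_add_map_le_map_add_map_sub (hIcc hs) hb hs.2 hx.2
    rw [show s + b - x = s + (b - x) by ring, ← log_mul (hpos s (hIcc hs)).ne' (hpos b hb).ne',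
      ← log_mul (hpos x hx).ne' (hpos _ (hshift hs)).ne',
      log_le_log_iff (mul_pos (hpos s (hIcc hs)) (hpos b hb))
        (mul_pos (hpos x hx) (hpos _ (hshift hs)))] at h
    linarith
  have hint₁ : IntervalIntegrable (fun s => f b * f s) MeasureTheory.volume a x := by
    refine ContinuousOn.intervalIntegrable ?_
    rw [uIcc_of_le hx.1]
    exact continuousOn_const.mul (hcont.mono hIcc)
  have hint₂ : IntervalIntegrable (fun s => f x * f (s + (b - x))) MeasureTheory.volume a x := by
    refine ContinuousOn.intervalIntegrable ?_
    rw [uIcc_of_le hx.1]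
    exact continuousOn_const.mul (hcont.comp (continuous_add_const _).continuousOn hshift)
  have h := integral_mono_on hx.1 hint₁ hint₂ hpt
  rwa [integral_const_mul, integral_const_mul, integral_comp_add_right,
    show a + (b - x) = a + b - x by ring, show x + (b - x) = b by ring] at h

lemma mul_integral_le_mul_integral_of_concaveOn_log
    (hlog : ConcaveOn ℝ (Icc a b) fun x => log (f x)) (hpos : ∀ y ∈ Icc a b, 0 < f y)
    (hcont : ContinuousOn f (Icc a b)) (hx : x ∈ Icc a b) :
    f b * ∫ s in a..x, f s ≤ f x * ∫ s in a..b, f s := by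
  refine (mul_integral_le_mul_integral_shift_of_concaveOn_log hlog hpos hcont hx).trans ?_
  refine mul_le_mul_of_nonneg_left ?_ (hpos x hx).le
  refine integral_mono_interval (by linarith [hx.2]) (by linarith [hx.1]) le_rfl ?_ ?_
  · filter_upwards [MeasureTheory.ae_restrict_mem measurableSet_Ioc] with s hs
    exact (hpos s (Ioc_subset_Icc_self hs)).le
  · exact hcont.intervalIntegrable_of_Icc (hx.1.trans hx.2)

end LogConcaveIntegral

theorem stmt_11 (N : ℕ) (f f' H : Fin N → ℝ → ℝ) (α β : ℝ)
    (hα : 0 < α)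
    (hfpos : ∀ i, ∀ x ∈ Set.Icc (0 : ℝ) 1, 0 < f i x)
    (hHpos : ∀ i, ∀ x ∈ Set.Ioc (0 : ℝ) 1, 0 < H i x)
    (hderiv : ∀ i, ∀ x ∈ Set.Icc (0 : ℝ) 1, HasDerivAt (f i) (f' i x) x)
    (hcdf : ∀ i, ∀ x ∈ Set.Icc (0 : ℝ) 1, H i x = ∫ s in (0 : ℝ)..x, f i s)
    (hpdf : ∀ i, ∫ s in (0 : ℝ)..1, f i s = 1)
    (hlogconc_f : ∀ i, ConcaveOn ℝ (Set.Icc (0 : ℝ) 1) (fun x => Real.log (f i x)))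
    (hf1 : ∀ i, α ≤ f i 1)
    (hf'1 : ∀ i, -β ≤ f' i 1)
    (hNbig : (1 : ℝ) + β / α ^ 2 ≤ N) :
    ∀ i, ∀ x ∈ Set.Ioc (0 : ℝ) 1,
      0 ≤ f' i x / f i x + ∑ j ∈ Finset.univ \ {i}, f j x / H j x := by
  intro i x hx
  have hxI : x ∈ Icc (0 : ℝ) 1 := Ioc_subset_Icc_self hx
  have h1I : (1 : ℝ) ∈ Icc (0 : ℝ) 1 := right_mem_Icc.2 zero_le_one
  have hratio : ∀ j, α ≤ f j x / H j x := fun j => by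
    have hcont : ContinuousOn (f j) (Icc 0 1) :=
      fun y hy => (hderiv j y hy).continuousAt.continuousWithinAt
    have h := mul_integral_le_mul_integral_of_concaveOn_log (hlogconc_f j) (hfpos j) hcont hxI
    rw [hpdf j, mul_one, ← hcdf j x hxI] at h
    rw [le_div_iff₀ (hHpos j x hx)]
    exact (mul_le_mul_of_nonneg_right (hf1 j) (hHpos j x hx).le).trans h
  have hN : 1 ≤ N := i.pos
  have hsum : ((N : ℝ) - 1) * α ≤ ∑ j ∈ Finset.univ \ {i}, f j x / H j x := by
    have h := Finset.card_nsmul_le_sum (Finset.univ \ {i}) _ α fun j _ => hratio j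
    rwa [nsmul_eq_mul, Finset.card_univ_sdiff, Finset.card_singleton,
      Fintype.card_fin, Nat.cast_sub hN, Nat.cast_one] at h
  have hmono : f' i 1 / f i 1 ≤ f' i x / f i x :=
    antitoneOn_logDeriv_of_concaveOn_log (hlogconc_f i) (fun y hy => (hfpos i y hy).ne')
      (hderiv i) hxI h1I hx.2
  have hβ : β ≤ ((N : ℝ) - 1) * α ^ 2 := by
    have := (div_le_iff₀ (pow_pos hα 2)).1 (le_sub_iff_add_le'.2 hNbig)
    linarith
  have hfi1 := hfpos i 1 h1I
  -- `f' i 1 + (N - 1) α f i 1 ≥ -β + (N - 1) α² ≥ 0`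
  have hat1 : 0 ≤ f' i 1 / f i 1 + ((N : ℝ) - 1) * α := by
    rw [div_add' _ _ _ hfi1.ne']
    refine div_nonneg ?_ hfi1.le
    have hN' : (0 : ℝ) ≤ N - 1 := sub_nonneg.2 (Nat.one_le_cast.2 hN)
    nlinarith [hf'1 i, mul_le_mul_of_nonneg_left (hf1 i) (mul_nonneg hN' hα.le)]
  linarith
end
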